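/- arXiv:2405.11545 — 4 statements merged into one kernel-verified Lean document; each statement's English description precedes it below -/
import Mathlib

section
/- (Proposition 1) Let A > 0, B > 0, α > 0, D > 0, and let τ⁻¹ ≤ 2Aα/3. Set r₀ = √(B/(A − τ⁻¹/α)) (well-defined since A − τ⁻¹/α ≥ A/3 > 0), and let J be the 2×2 real matrix with rows (−α·r₀, −τ⁻¹/(2r₀²)) and (2D, (D/r₀³)·(3τ⁻¹/α − 2A)). Then every complex eigenvalue of J has negative real part; i.e., the SRK equilibrium (S₀, r₀²) is linearly stable. -/
/-!
Since `J` is a real `2 × 2` matrix, its eigenvalues are the roots of `z² - (tr J) z + det J`,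
and both roots lie in the open left half-plane as soon as `tr J < 0 < det J`. Here
`det J = 2D(Aα - τ⁻¹)/r₀² > 0`, while `tr J < 0` because `-α r₀ < 0` and `3τ⁻¹/α - 2A ≤ 0`.
-/

open Matrix

theorem Complex.re_neg_of_sq_sub_mul_add_eq_zero {t d : ℝ} (ht : t < 0) (hd : 0 < d) {z : ℂ}
    (hz : z ^ 2 - t * z + d = 0) : z.re < 0 := by
  have hre : z.re ^ 2 - z.im ^ 2 - t * z.re + d = 0 := by
    simpa [sq] using congrArg Complex.re hz
  have him : z.im * (2 * z.re - t) = 0 := by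
    have := congrArg Complex.im hz
    simp only [sq, Complex.sub_im, Complex.add_im, Complex.mul_im, Complex.ofReal_re,
      Complex.ofReal_im, Complex.zero_im] at this
    linear_combination this
  rcases mul_eq_zero.mp him with hy | hx
  · by_contra! hx
    nlinarith [hy]
  · linarith

theorem Matrix.sq_sub_trace_mul_add_det_eq_zero {K : Type*} [CommRing K] [IsDomain K]
    (M : Matrix (Fin 2) (Fin 2) K) {μ : K} {v : Fin 2 → K} (hv : v ≠ 0) (h : M *ᵥ v = μ • v) :
    μ ^ 2 - M.trace * μ + M.det = 0 := by
  have hsing : (M - μ • 1).det = 0 :=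
    exists_mulVec_eq_zero_iff.mp ⟨v, hv, by rw [sub_mulVec, h, smul_mulVec, one_mulVec, sub_self]⟩
  rw [det_fin_two] at hsing
  rw [trace_fin_two, det_fin_two]
  simp only [sub_apply, smul_apply, one_apply_eq, one_apply_ne (show (0 : Fin 2) ≠ 1 by decide),
    one_apply_ne (show (1 : Fin 2) ≠ 0 by decide), smul_eq_mul, mul_one, mul_zero, sub_zero] at hsing
  linear_combination hsing

theorem Matrix.re_neg_of_trace_neg_of_det_pos (M : Matrix (Fin 2) (Fin 2) ℝ) (htr : M.trace < 0)
    (hdet : 0 < M.det) {μ : ℂ} {v : Fin 2 → ℂ} (hv : v ≠ 0)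
    (h : (M.map Complex.ofReal) *ᵥ v = μ • v) : μ.re < 0 := by
  refine Complex.re_neg_of_sq_sub_mul_add_eq_zero htr hdet ?_
  have := (M.map Complex.ofReal).sq_sub_trace_mul_add_det_eq_zero hv h
  rw [trace_fin_two, det_fin_two] at this ⊢
  simpa using this

noncomputable def srkJacobian (A α D τinv r0 : ℝ) : Matrix (Fin 2) (Fin 2) ℝ :=
  !![-(α * r0), -(τinv / (2 * r0 ^ 2)); 2 * D, (D / r0 ^ 3) * (3 * τinv / α - 2 * A)]

theorem srkJacobian_trace_neg {A α D τinv r0 : ℝ} (hα : 0 < α) (hD : 0 ≤ D) (hr0 : 0 < r0)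
    (hτ : 3 * τinv ≤ 2 * A * α) : (srkJacobian A α D τinv r0).trace < 0 := by
  have hdiag : 3 * τinv / α - 2 * A ≤ 0 := by
    rw [sub_nonpos, div_le_iff₀ hα]; exact hτ
  rw [srkJacobian, trace_fin_two_of]
  nlinarith [mul_nonpos_of_nonneg_of_nonpos (by positivity : 0 ≤ D / r0 ^ 3) hdiag, mul_pos hα hr0]

theorem srkJacobian_det {A α D τinv r0 : ℝ} (hα : α ≠ 0) (hr0 : r0 ≠ 0) :
    (srkJacobian A α D τinv r0).det = 2 * D * (A * α - τinv) / r0 ^ 2 := by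
  rw [srkJacobian, det_fin_two_of]
  field_simp
  ring

/-- Proposition 1: for `τ⁻¹ ≤ 2Aα/3`, every complex eigenvalue of the SRK
Jacobian at the equilibrium has negative real part (linear stability). -/
theorem srk_stability (A B α D τinv : ℝ) (hA : 0 < A) (hB : 0 < B)
    (hα : 0 < α) (hD : 0 < D) (hτ : τinv ≤ 2 * A * α / 3)
    (r0 : ℝ) (hr0 : r0 = Real.sqrt (B / (A - τinv / α)))
    (J : Matrix (Fin 2) (Fin 2) ℝ)
    (hJ : J = !![-(α * r0), -(τinv / (2 * r0 ^ 2));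
                 2 * D, (D / r0 ^ 3) * (3 * τinv / α - 2 * A)]) :
    ∀ (μ : ℂ) (v : Fin 2 → ℂ), v ≠ 0 →
      (J.map (Complex.ofReal)).mulVec v = μ • v → μ.re < 0 := by
  intro μ v hv hev
  have hAα : 0 < A * α := mul_pos hA hα
  have hgap : 0 < A - τinv / α := by
    rw [sub_pos, div_lt_iff₀ hα]; linarith
  have hr0pos : 0 < r0 := hr0 ▸ Real.sqrt_pos.mpr (div_pos hB hgap)
  subst hJ
  refine (srkJacobian A α D τinv r0).re_neg_of_trace_neg_of_det_pos ?_ ?_ hv hev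
  · exact srkJacobian_trace_neg hα hD.le hr0pos (by linarith)
  · rw [srkJacobian_det hα.ne' hr0pos.ne']
    have : 0 < A * α - τinv := by linarith
    positivity
end

section
/- (Proposition 2) Let A > 0, B > 0, D > 0 and suppose 0 < α < (4A³D)/(243B²). Then there exist τ_a and τ_b with 0 < τ_a < τ_b < A·α such that for every τ⁻¹ ∈ (τ_a, τ_b), the trace of the Jacobian J of the SRK system at the equilibrium is strictly positive, where J = [[−α·r₀, −τ⁻¹/(2r₀²)], [2D, (D/r₀³)(3τ⁻¹/α − 2A)]] with r₀ = √(B/(A − τ⁻¹/α)). -/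
/-!
Write `x = τ⁻¹/α` and `r₀² = B/(A - x)`. For `x < A` the trace `-α r₀ + D (3x - 2A)/r₀³` is
positive exactly when `α B² < D (3x - 2A)(A - x)²`. The cubic `(3x - 2A)(A - x)²` attains its
maximum `4A³/243` on `(0, A)` at `x = 7A/9`, so the hypothesis on `α` says that the inequality
holds at `x = 7A/9`; by continuity it holds on an interval `(τ_a/α, τ_b/α)` around that point.
-/

open Set Filter Topology

theorem ContinuousAt.exists_Ioo_forall_lt {X Y : Type*} [TopologicalSpace X] [LinearOrder X]
    [OrderTopology X] [DenselyOrdered X] [TopologicalSpace Y] [LinearOrder Y]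
    [OrderClosedTopology Y] {g : X → Y} {lo hi c : X} {y : Y} (hg : ContinuousAt g c)
    (hc : c ∈ Ioo lo hi) (hy : y < g c) :
    ∃ a b, lo < a ∧ a < b ∧ b < hi ∧ ∀ x ∈ Ioo a b, y < g x := by
  have hnhds : Ioo lo hi ∩ {x | y < g x} ∈ 𝓝 c :=
    inter_mem (Ioo_mem_nhds hc.1 hc.2) (hg.eventually_const_lt hy)
  obtain ⟨l, u, ⟨hlc, hcu⟩, hsub⟩ :=
    (mem_nhds_iff_exists_Ioo_subset' ⟨lo, hc.1⟩ ⟨hi, hc.2⟩).mp hnhds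
  obtain ⟨a, hla, hac⟩ := exists_between hlc
  obtain ⟨b, hcb, hbu⟩ := exists_between hcu
  exact ⟨a, b, (hsub ⟨hla, hac.trans hcu⟩).1.1, hac.trans hcb, (hsub ⟨hlc.trans hcb, hbu⟩).1.2,
    fun x hx => (hsub ⟨hla.trans hx.1, hx.2.trans hbu⟩).2⟩

theorem neg_mul_add_div_pow_three_mul_pos_iff {α D m r : ℝ} (hr : 0 < r) :
    0 < -(α * r) + D / r ^ 3 * m ↔ α * r ^ 4 < D * m := by
  rw [div_mul_eq_mul_div, ← sub_eq_neg_add, sub_pos, lt_div_iff₀ (by positivity)]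
  ring_nf

theorem neg_mul_sqrt_add_div_sqrt_pow_three_mul_pos {A B α D x : ℝ} (hB : 0 < B) (hx : x < A)
    (h : α * B ^ 2 < D * ((3 * x - 2 * A) * (A - x) ^ 2)) :
    0 < -(α * √(B / (A - x))) + D / √(B / (A - x)) ^ 3 * (3 * x - 2 * A) := by
  have hs : 0 < A - x := sub_pos.mpr hx
  rw [neg_mul_add_div_pow_three_mul_pos_iff (by positivity)]
  have hr4 : √(B / (A - x)) ^ 4 = B ^ 2 / (A - x) ^ 2 := by
    rw [show (4 : ℕ) = 2 * 2 from rfl, pow_mul, Real.sq_sqrt (by positivity), div_pow]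
  rw [hr4, ← mul_div_assoc, div_lt_iff₀ (by positivity)]
  linarith

theorem srk_positive_trace_interval_general (A B α D : ℝ) (hA : 0 < A) (hB : 0 < B)
    (hα0 : 0 < α) (hα : α < 4 * A ^ 3 * D / (243 * B ^ 2)) :
    ∃ τa τb : ℝ, 0 < τa ∧ τa < τb ∧ τb < A * α ∧
      ∀ τinv ∈ Set.Ioo τa τb,
        ∀ (r0 : ℝ) (J : Matrix (Fin 2) (Fin 2) ℝ),
          r0 = Real.sqrt (B / (A - τinv / α)) →
          J = !![-(α * r0), -(τinv / (2 * r0 ^ 2));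
                 2 * D, (D / r0 ^ 3) * (3 * τinv / α - 2 * A)] →
          0 < J.trace := by
  have hcrit : α * B ^ 2 < D * ((3 * (7 * A / 9) - 2 * A) * (A - 7 * A / 9) ^ 2) := by
    rw [lt_div_iff₀ (by positivity)] at hα
    linarith [show (3 * (7 * A / 9) - 2 * A) * (A - 7 * A / 9) ^ 2 = 4 * A ^ 3 / 243 by ring]
  obtain ⟨a, b, ha, hab, hbA, hpos⟩ :=
    ContinuousAt.exists_Ioo_forall_lt (g := fun x => D * ((3 * x - 2 * A) * (A - x) ^ 2))
      (by fun_prop) (show 7 * A / 9 ∈ Ioo 0 A from ⟨by positivity, by linarith⟩) hcrit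
  refine ⟨a * α, b * α, by positivity, by gcongr, by gcongr, ?_⟩
  rintro τinv ⟨hlo, hhi⟩ r0 J rfl rfl
  have hx : τinv / α ∈ Ioo a b := ⟨(lt_div_iff₀ hα0).2 hlo, (div_lt_iff₀ hα0).2 hhi⟩
  rw [Matrix.trace_fin_two_of, mul_div_assoc]
  exact neg_mul_sqrt_add_div_sqrt_pow_three_mul_pos hB (hx.2.trans hbA) (hpos _ hx)

/-- Proposition 2: if `0 < α < 4A³D/(243B²)`, there is a nonempty open interval
`(τ_a, τ_b) ⊂ (0, Aα)` on which the trace of the SRK Jacobian at the equilibrium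
is strictly positive. -/
theorem srk_positive_trace_interval (A B α D : ℝ) (hA : 0 < A) (hB : 0 < B)
    (hD : 0 < D) (hα0 : 0 < α) (hα : α < 4 * A ^ 3 * D / (243 * B ^ 2)) :
    ∃ τa τb : ℝ, 0 < τa ∧ τa < τb ∧ τb < A * α ∧
      ∀ τinv ∈ Set.Ioo τa τb,
        ∀ (r0 : ℝ) (J : Matrix (Fin 2) (Fin 2) ℝ),
          r0 = Real.sqrt (B / (A - τinv / α)) →
          J = !![-(α * r0), -(τinv / (2 * r0 ^ 2));
                 2 * D, (D / r0 ^ 3) * (3 * τinv / α - 2 * A)] →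
          0 < J.trace :=
  srk_positive_trace_interval_general A B α D hA hB hα0 hα
end

section
/- Let A > 0, B > 0, D > 0 and suppose 0 < α < (4A³D)/(243B²). Take τ⁻¹ = 7Aα/9 and r₀ = √(B/(A − τ⁻¹/α)), and let J be the 2×2 real matrix with rows (−α·r₀, −τ⁻¹/(2r₀²)) and (2D, (D/r₀³)·(3τ⁻¹/α − 2A)). Then J has a complex eigenvalue with strictly positive real part; i.e., the SRK equilibrium is linearly unstable at τ⁻¹ = 7Aα/9. -/
lemma quad_root (t δ : ℝ) (ht : 0 < t) :
    ∃ μ : ℂ, 0 < μ.re ∧ μ ^ 2 - t * μ + δ = 0 := by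
  rcases le_or_gt 0 (t ^ 2 - 4 * δ) with h | h
  · refine ⟨(((t + Real.sqrt (t ^ 2 - 4 * δ)) / 2 : ℝ) : ℂ), ?_, ?_⟩
    · simp only [Complex.ofReal_re]
      positivity
    · have hs : Real.sqrt (t ^ 2 - 4 * δ) ^ 2 = t ^ 2 - 4 * δ := Real.sq_sqrt h
      have : ((t + Real.sqrt (t ^ 2 - 4 * δ)) / 2) ^ 2
          - t * ((t + Real.sqrt (t ^ 2 - 4 * δ)) / 2) + δ = 0 := by
        linear_combination hs / 4
      push_cast
      have h2 := congrArg (Complex.ofReal) this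
      push_cast at h2 ⊢
      linear_combination h2
  · refine ⟨(↑t + ↑(Real.sqrt (4 * δ - t ^ 2)) * Complex.I) / 2, ?_, ?_⟩
    · simp [Complex.div_re]
      positivity
    · have hs : Real.sqrt (4 * δ - t ^ 2) ^ 2 = 4 * δ - t ^ 2 :=
        Real.sq_sqrt (by linarith)
      have hs' : ((Real.sqrt (4 * δ - t ^ 2) : ℂ)) ^ 2 = 4 * (δ : ℂ) - (t : ℂ) ^ 2 := by
        exact_mod_cast congrArg (Complex.ofReal) hs
      linear_combination ((Real.sqrt (4 * δ - t ^ 2) : ℂ) ^ 2 / 4) * Complex.I_sq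
        - (1 / 4 : ℂ) * hs'

lemma eig_of_pos_trace (a b c d : ℝ) (hb : b ≠ 0) (ht : 0 < a + d) :
    ∃ (μ : ℂ) (v : Fin 2 → ℂ), v ≠ 0 ∧
      ((!![a, b; c, d] : Matrix (Fin 2) (Fin 2) ℝ).map Complex.ofReal).mulVec v
        = μ • v ∧ 0 < μ.re := by
  obtain ⟨μ, hμre, hμ⟩ := quad_root (a + d) (a * d - b * c) ht
  refine ⟨μ, ![(b : ℂ), μ - a], ?_, ?_, hμre⟩
  · intro h
    have := congrFun h 0
    simp at this
    exact hb this
  · funext i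
    fin_cases i <;>
      simp [Matrix.mulVec, dotProduct, Fin.sum_univ_two, Matrix.map_apply]
    · ring
    · push_cast at hμ ⊢
      linear_combination -hμ

/-- If `0 < α < 4A³D/(243B²)`, then at `τ⁻¹ = 7Aα/9` the SRK Jacobian at the
equilibrium has a complex eigenvalue with strictly positive real part
(linear instability). -/
theorem srk_instability_at_seven_ninths (A B α D : ℝ) (hA : 0 < A) (hB : 0 < B)
    (hD : 0 < D) (hα0 : 0 < α) (hα : α < 4 * A ^ 3 * D / (243 * B ^ 2))
    (τinv : ℝ) (hτ : τinv = 7 * A * α / 9)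
    (r0 : ℝ) (hr0 : r0 = Real.sqrt (B / (A - τinv / α)))
    (J : Matrix (Fin 2) (Fin 2) ℝ)
    (hJ : J = !![-(α * r0), -(τinv / (2 * r0 ^ 2));
                 2 * D, (D / r0 ^ 3) * (3 * τinv / α - 2 * A)]) :
    ∃ (μ : ℂ) (v : Fin 2 → ℂ), v ≠ 0 ∧
      (J.map (Complex.ofReal)).mulVec v = μ • v ∧ 0 < μ.re := by
  have hαne : α ≠ 0 := ne_of_gt hα0
  have hratio : τinv / α = 7 * A / 9 := by rw [hτ]; field_simp
  have hsub : A - τinv / α = 2 * A / 9 := by rw [hratio]; ring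
  have harg : B / (A - τinv / α) = 9 * B / (2 * A) := by
    rw [hsub]; field_simp
  have hargpos : 0 < 9 * B / (2 * A) := by positivity
  have hr0pos : 0 < r0 := by
    rw [hr0, harg]; exact Real.sqrt_pos.mpr hargpos
  have hr2 : r0 ^ 2 = 9 * B / (2 * A) := by
    rw [hr0, harg]; exact Real.sq_sqrt (le_of_lt hargpos)
  have hr2' : 2 * A * r0 ^ 2 = 9 * B := by
    field_simp at hr2; linarith
  have hαB : 243 * B ^ 2 * α < 4 * A ^ 3 * D := by
    have h243 : (0:ℝ) < 243 * B ^ 2 := by positivity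
    have := (lt_div_iff₀ h243).mp hα
    linarith
  have hr4 : 4 * A ^ 2 * r0 ^ 4 = 81 * B ^ 2 := by
    linear_combination (2 * A * r0 ^ 2 + 9 * B) * hr2'
  have hkey : 3 * α * r0 ^ 4 < A * D := by
    nlinarith [hr4, hαB, mul_pos hA hA, mul_pos hA hD]
  have hb : -(τinv / (2 * r0 ^ 2)) ≠ 0 := by
    rw [hτ]
    have : 0 < 7 * A * α / 9 / (2 * r0 ^ 2) := by positivity
    linarith
  have htr : 0 < -(α * r0) + (D / r0 ^ 3) * (3 * τinv / α - 2 * A) := by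
    have h1 : 3 * τinv / α - 2 * A = A / 3 := by
      rw [hτ]; field_simp; ring
    rw [h1]
    rw [show -(α * r0) + D / r0 ^ 3 * (A / 3)
        = (A * D - 3 * α * r0 ^ 4) / (3 * r0 ^ 3) by field_simp; ring]
    apply div_pos (by linarith) (by positivity)
  rw [hJ]
  exact eig_of_pos_trace _ _ _ _ hb htr
end

section
/- Let A > 0, B > 0, D > 0 and suppose α > (4A³D)/(243B²). Then for every τ⁻¹ with 0 < τ⁻¹ < A·α, setting r₀ = √(B/(A − τ⁻¹/α)) and letting J be the 2×2 real matrix with rows (−α·r₀, −τ⁻¹/(2r₀²)) and (2D, (D/r₀³)·(3τ⁻¹/α − 2A)), the trace of J is strictly negative, and every complex eigenvalue of J has negative real part; i.e., the SRK equilibrium is linearly stable throughout the whole interval 0 < τ⁻¹ < A·α even where r₀² > r_c² = 3B/A. -/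
set_option maxHeartbeats 1000000

/-- If `α > 4A³D/(243B²)`, then for every `0 < τ⁻¹ < Aα` the trace of the SRK
Jacobian at the equilibrium is strictly negative and every complex eigenvalue
has negative real part: the equilibrium is linearly stable on the whole
interval up to the activation threshold. -/
theorem srk_stability_large_alpha (A B α D : ℝ) (hA : 0 < A) (hB : 0 < B)
    (hD : 0 < D) (hα : 4 * A ^ 3 * D / (243 * B ^ 2) < α) :
    ∀ τinv : ℝ, 0 < τinv → τinv < A * α →
      ∀ (r0 : ℝ) (J : Matrix (Fin 2) (Fin 2) ℝ),
        r0 = Real.sqrt (B / (A - τinv / α)) →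
        J = !![-(α * r0), -(τinv / (2 * r0 ^ 2));
               2 * D, (D / r0 ^ 3) * (3 * τinv / α - 2 * A)] →
        J.trace < 0 ∧
          ∀ (μ : ℂ) (v : Fin 2 → ℂ), v ≠ 0 →
            (J.map (Complex.ofReal)).mulVec v = μ • v → μ.re < 0 := by
  intro τinv hτ hτA r0 J hr0 hJ
  have hαD : 0 < 4 * A ^ 3 * D / (243 * B ^ 2) := by positivity
  have hα0 : 0 < α := lt_trans hαD hα
  set x : ℝ := A - τinv / α with hxdef
  have hx : 0 < x := by
    have h1 : τinv / α < A := (div_lt_iff₀ hα0).2 (by linarith [mul_comm A α])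
    simp [hxdef]; linarith
  have hr0pos : 0 < r0 := by
    rw [hr0]; exact Real.sqrt_pos.2 (by positivity)
  have hr0sq : r0 ^ 2 = B / x := by
    rw [hr0, Real.sq_sqrt (by positivity : (0:ℝ) ≤ B / x)]
  have hτα : τinv / α = A - x := by simp [hxdef]
  -- key polynomial inequality
  have key : D * (A - 3*x) * x^2 < α * B^2 := by
    have h1 : 4 * A ^ 3 * D < 243 * (α * B^2) := by
      rw [div_lt_iff₀ (by positivity)] at hα; nlinarith
    nlinarith [mul_nonneg (mul_nonneg hD.le (sq_nonneg (9*x - 2*A))) (by linarith : (0:ℝ) ≤ 9*x + A)]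
  -- trace
  set t : ℝ := -(α * r0) + (D / r0 ^ 3) * (3 * τinv / α - 2 * A) with htdef
  have htrace : J.trace = t := by
    simp [hJ, Matrix.trace_fin_two, htdef]
  have h3 : 3 * τinv / α - 2 * A = A - 3*x := by
    rw [mul_div_assoc, hτα]; ring
  have hr04 : r0 ^ 4 = B^2 / x^2 := by
    rw [show r0^4 = (r0^2)^2 by ring, hr0sq, div_pow]
  have ht : t < 0 := by
    rw [htdef, h3]
    have heq : -(α * r0) + (D / r0 ^ 3) * (A - 3*x)
        = (-(α * r0^4) + D * (A - 3*x)) / r0^3 := by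
      field_simp
    rw [heq]
    apply div_neg_of_neg_of_pos _ (by positivity)
    rw [hr04]
    have heq2 : -(α * (B^2 / x^2)) + D * (A - 3*x)
        = (D * (A - 3*x) * x^2 - α * B^2) / x^2 := by
      field_simp; ring
    rw [heq2]
    exact div_neg_of_neg_of_pos (by linarith) (by positivity)
  refine ⟨htrace ▸ ht, ?_⟩
  -- determinant
  set d : ℝ := (-(α * r0)) * ((D / r0 ^ 3) * (3 * τinv / α - 2 * A))
      - (-(τinv / (2 * r0 ^ 2))) * (2 * D) with hddef
  have hd : 0 < d := by
    have heq : d = (D * (2 * A * α - 2 * τinv)) / r0^2 := by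
      rw [hddef]; field_simp; ring
    rw [heq]
    exact div_pos (by nlinarith) (by positivity)
  clear_value t d
  intro μ v hv hmul
  have e0 := congrFun hmul 0
  have e1 := congrFun hmul 1
  simp [hJ, Matrix.mulVec, dotProduct, Fin.sum_univ_two, Matrix.map_apply] at e0 e1
  -- nonzero first component
  have hr0c : (r0:ℂ) ≠ 0 := Complex.ofReal_ne_zero.2 hr0pos.ne'
  have hv0 : v 0 ≠ 0 := by
    intro h0
    have hc : -((τinv:ℂ) / (2 * (r0:ℂ) ^ 2)) ≠ 0 := by
      simp only [neg_ne_zero]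
      exact div_ne_zero (Complex.ofReal_ne_zero.2 hτ.ne') (mul_ne_zero two_ne_zero (pow_ne_zero 2 hr0c))
    have h1 : v 1 = 0 := by
      have h2 : ((τinv:ℂ) / (2 * (r0:ℂ)^2)) * v 1 = 0 := by
        rw [h0] at e0; linear_combination -e0
      exact (mul_eq_zero.1 h2).resolve_left
        (div_ne_zero (Complex.ofReal_ne_zero.2 hτ.ne')
          (mul_ne_zero two_ne_zero (pow_ne_zero 2 hr0c)))
    apply hv
    funext i; fin_cases i <;> simp [h0, h1]
  -- characteristic equation
  have k0 : (μ - (-((α:ℂ) * r0))) * v 0 = (-((τinv:ℂ) / (2 * (r0:ℂ)^2))) * v 1 := by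
    linear_combination -e0
  have k1 : (μ - ((D:ℂ) / (r0:ℂ)^3 * (3 * (τinv:ℂ) / (α:ℂ) - 2 * (A:ℂ)))) * v 1
      = (2 * (D:ℂ)) * v 0 := by
    linear_combination -e1
  have hprod : ((μ - (-((α:ℂ) * r0))) * (μ - ((D:ℂ) / (r0:ℂ)^3 * (3 * (τinv:ℂ) / (α:ℂ) - 2 * (A:ℂ))))
      - (-((τinv:ℂ) / (2 * (r0:ℂ)^2))) * (2 * (D:ℂ))) * v 0 = 0 := by
    linear_combination (μ - ((D:ℂ) / (r0:ℂ)^3 * (3 * (τinv:ℂ) / (α:ℂ) - 2 * (A:ℂ)))) * k0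
      + (-((τinv:ℂ) / (2 * (r0:ℂ)^2))) * k1
  have hchar : (μ - (-((α:ℂ) * r0))) * (μ - ((D:ℂ) / (r0:ℂ)^3 * (3 * (τinv:ℂ) / (α:ℂ) - 2 * (A:ℂ))))
      - (-((τinv:ℂ) / (2 * (r0:ℂ)^2))) * (2 * (D:ℂ)) = 0 :=
    (mul_eq_zero.1 hprod).resolve_right hv0
  have hαc : (α:ℂ) ≠ 0 := Complex.ofReal_ne_zero.2 hα0.ne'
  have hct : ((t:ℂ)) = (-((α:ℂ) * r0)) + ((D:ℂ) / (r0:ℂ)^3 * (3 * (τinv:ℂ) / (α:ℂ) - 2 * (A:ℂ))) := by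
    rw [htdef]; push_cast; ring
  have hcd : ((d:ℂ)) = (-((α:ℂ) * r0)) * ((D:ℂ) / (r0:ℂ)^3 * (3 * (τinv:ℂ) / (α:ℂ) - 2 * (A:ℂ)))
      - (-((τinv:ℂ) / (2 * (r0:ℂ)^2))) * (2 * (D:ℂ)) := by
    rw [hddef]; push_cast; ring
  have hq : μ^2 - (t:ℂ) * μ + (d:ℂ) = 0 := by
    rw [hct, hcd]; linear_combination hchar
  have hre := congrArg Complex.re hq
  have him := congrArg Complex.im hq
  simp only [Complex.add_re, Complex.sub_re, Complex.add_im, Complex.sub_im,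
    Complex.mul_re, Complex.mul_im, Complex.ofReal_re, Complex.ofReal_im, Complex.zero_re,
    Complex.zero_im, pow_two] at hre him
  by_contra hcon
  push_neg at hcon
  have hb : μ.im * (2 * μ.re - t) = 0 := by linarith [him]
  rcases mul_eq_zero.1 hb with hb0 | hb0
  · rw [hb0] at hre; nlinarith [hre, mul_nonneg hcon (by linarith : (0:ℝ) ≤ -t)]
  · linarith
end
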